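/- arXiv:1402.4919 — 4 statements merged into one kernel-verified Lean document; each statement's English description precedes it below -/
import Mathlib

section
/- Let K be an infinite field, n ∈ ℕ, and G ⊆ GL_n(K) be a subgroup endowed with a topology making it a topological group, such that G has an open subgroup which is soluble (respectively, nilpotent). Then G has an open normal subgroup which is soluble (respectively, nilpotent). -/
open scoped Manifold
open Matrix

universe u

/-! ### Basic group-theoretic notions -/

/-- A subgroup is subnormal if it is the last term of a finite descending chain of
subgroups starting at `⊤`, each normal in its predecessor. -/
def IsSubnormal {G : Type*} [Group G] (S : Subgroup G) : Prop :=
  ∃ (k : ℕ) (c : ℕ → Subgroup G), c 0 = ⊤ ∧ c k = S ∧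
    (∀ i, c (i + 1) ≤ c i) ∧ ∀ i, ∀ x ∈ c i, ∀ y ∈ c (i + 1), x * y * x⁻¹ ∈ c (i + 1)

/-- A topological group is nearly simple if every closed subnormal subgroup is
open or discrete. -/
def NearlySimple (G : Type*) [Group G] [TopologicalSpace G] : Prop :=
  ∀ S : Subgroup G, IsSubnormal S → IsClosed (S : Set G) →
    IsOpen (S : Set G) ∨ DiscreteTopology S

/-- Isomorphism of topological groups. -/
def TopGrpIso (G H : Type*) [Group G] [TopologicalSpace G] [Group H] [TopologicalSpace H] :
    Prop :=
  ∃ e : G ≃* H, Continuous e ∧ Continuous e.symm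

/-- A topological group is topologically simple if it is non-trivial and its only
closed normal subgroups are `⊥` and `⊤`. -/
def TopologicallySimple (G : Type*) [Group G] [TopologicalSpace G] : Prop :=
  Nontrivial G ∧ ∀ N : Subgroup G, N.Normal → IsClosed (N : Set G) → N = ⊥ ∨ N = ⊤

/-- The radical of a group: the union of all soluble normal subgroups. -/
def radicalSet (G : Type*) [Group G] : Set G :=
  ⋃ N ∈ {N : Subgroup G | N.Normal ∧ IsSolvable N}, (N : Set G)

/-- Exactly one of two propositions holds. -/
def ExactlyOne2 (a b : Prop) : Prop := (a ∨ b) ∧ ¬(a ∧ b)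

/-- Exactly one of four propositions holds. -/
def ExactlyOne4 (a b c d : Prop) : Prop :=
  (a ∨ b ∨ c ∨ d) ∧ ¬(a ∧ b) ∧ ¬(a ∧ c) ∧ ¬(a ∧ d) ∧ ¬(b ∧ c) ∧ ¬(b ∧ d) ∧ ¬(c ∧ d)

/-- Exactly one of five propositions holds. -/
def ExactlyOne5 (a b c d e : Prop) : Prop :=
  (a ∨ b ∨ c ∨ d ∨ e) ∧ ¬(a ∧ b) ∧ ¬(a ∧ c) ∧ ¬(a ∧ d) ∧ ¬(a ∧ e) ∧ ¬(b ∧ c) ∧ ¬(b ∧ d) ∧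
    ¬(b ∧ e) ∧ ¬(c ∧ d) ∧ ¬(c ∧ e) ∧ ¬(d ∧ e)

/-! ### p-adic Lie groups -/

/-- A `p`-adic Lie group structure on a topological group `G`: a finite-dimensional
analytic (here: smooth) manifold structure over `ℚ_[p]` making multiplication and
inversion smooth. -/
structure PadicLieGroup (p : ℕ) [Fact p.Prime] (G : Type*) [Group G] [TopologicalSpace G] where
  dim : ℕ
  charted : ChartedSpace (Fin dim → ℚ_[p]) G
  lie : letI := charted; LieGroup (𝓘(ℚ_[p], Fin dim → ℚ_[p])) (⊤ : ℕ∞) G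

variable {p : ℕ} [Fact p.Prime] {G : Type*} [Group G] [TopologicalSpace G]

/-- The adjoint representation: the derivative at `1` of conjugation by `g`,
an endomorphism of the Lie algebra `L(G) = Fin dim → ℚ_[p]` (the tangent space at `1`). -/
noncomputable def PadicLieGroup.Ad (h : PadicLieGroup p G) (g : G) :
    (Fin h.dim → ℚ_[p]) →L[ℚ_[p]] (Fin h.dim → ℚ_[p]) :=
  letI := h.charted
  mfderiv (𝓘(ℚ_[p], Fin h.dim → ℚ_[p])) (𝓘(ℚ_[p], Fin h.dim → ℚ_[p]))
    (fun x => g * x * g⁻¹) (1 : G)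

/-- The infinitesimal adjoint representation, `ad = L(Ad)`: the derivative of `Ad` at `1`. -/
noncomputable def PadicLieGroup.adRep (h : PadicLieGroup p G) :
    (Fin h.dim → ℚ_[p]) →L[ℚ_[p]] ((Fin h.dim → ℚ_[p]) →L[ℚ_[p]] (Fin h.dim → ℚ_[p])) :=
  letI := h.charted
  mfderiv (𝓘(ℚ_[p], Fin h.dim → ℚ_[p]))
    (𝓘(ℚ_[p], (Fin h.dim → ℚ_[p]) →L[ℚ_[p]] (Fin h.dim → ℚ_[p]))) h.Ad (1 : G)

/-- The Lie bracket on the Lie algebra of `G`: `⁅x, y⁆ = ad(x)(y)`. -/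
noncomputable def PadicLieGroup.bracket (h : PadicLieGroup p G) :
    (Fin h.dim → ℚ_[p]) → (Fin h.dim → ℚ_[p]) → (Fin h.dim → ℚ_[p]) :=
  fun x y => h.adRep x y

/-- The Lie algebra `L(H)` of a subgroup `H ⊆ G`: the tangent cone to `H` at the
identity, read in the chart at the identity. -/
noncomputable def PadicLieGroup.Lsub (h : PadicLieGroup p G) (H : Subgroup G) :
    Set (Fin h.dim → ℚ_[p]) :=
  letI := h.charted
  tangentConeAt ℚ_[p]
    ((chartAt (Fin h.dim → ℚ_[p]) (1 : G)) ''
      ((H : Set G) ∩ (chartAt (Fin h.dim → ℚ_[p]) (1 : G)).source))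
    ((chartAt (Fin h.dim → ℚ_[p]) (1 : G)) 1)

/-- A `p`-adic Lie group is extraordinary if it is nearly simple, `G = ker Ad_G`, and the
commutator subgroup of every open subnormal subgroup is non-discrete. -/
def PadicLieGroup.Extraordinary (h : PadicLieGroup p G) : Prop :=
  NearlySimple G ∧
    (∀ g : G, h.Ad g = ContinuousLinearMap.id ℚ_[p] (Fin h.dim → ℚ_[p])) ∧
    ∀ S : Subgroup G, IsSubnormal S → IsOpen (S : Set G) → ¬ DiscreteTopology (commutator S)

/-- Linearity of a `p`-adic Lie group. -/
def PadicLinear (p : ℕ) [Fact p.Prime] (G : Type*) [Group G] [TopologicalSpace G] : Prop :=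
  ∃ (n : ℕ) (f : G →* GL (Fin n) ℚ_[p]), Continuous f ∧ Function.Injective f

/-! ### Bracket algebras (Lie-algebra notions for a not-yet-verified bracket) -/

section Bracket

variable (K : Type*) [Field K] {V : Type*} [AddCommGroup V] [Module K V]

/-- A submodule is an ideal for a bracket if it absorbs brackets on both sides. -/
def IsBracketIdeal (b : V → V → V) (N : Submodule K V) : Prop :=
  ∀ x : V, ∀ y ∈ N, b x y ∈ N ∧ b y x ∈ N

/-- Derived series of a submodule with respect to a bracket. -/
def bracketDerivedSeries (b : V → V → V) (N : Submodule K V) : ℕ → Submodule K V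
  | 0 => N
  | (k + 1) => Submodule.span K
      {z | ∃ x ∈ bracketDerivedSeries b N k, ∃ y ∈ bracketDerivedSeries b N k, z = b x y}

/-- Solubility of a submodule with respect to a bracket. -/
def IsBracketSoluble (b : V → V → V) (N : Submodule K V) : Prop :=
  ∃ n, bracketDerivedSeries K b N n = ⊥

/-- The radical of a bracket algebra: the supremum of all soluble ideals. -/
def bracketRadical (b : V → V → V) : Submodule K V :=
  sSup {N | IsBracketIdeal K b N ∧ IsBracketSoluble K b N}

/-- Simplicity of a bracket algebra: non-abelian, and no ideals besides `⊥` and `⊤`. -/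
def IsBracketSimple (b : V → V → V) : Prop :=
  (∃ x y, b x y ≠ 0) ∧ ∀ N : Submodule K V, IsBracketIdeal K b N → N = ⊥ ∨ N = ⊤

end Bracket

/-! ### Automorphism groups of Lie algebras -/

/-- The automorphism group of a bracket on `Fin d → ℚ_[p]`, as a subgroup of
`GL (Fin d) ℚ_[p]`. -/
def autGroupOfBracket {p : ℕ} [Fact p.Prime] {d : ℕ}
    (b : (Fin d → ℚ_[p]) → (Fin d → ℚ_[p]) → (Fin d → ℚ_[p])) :
    Subgroup (GL (Fin d) ℚ_[p]) where
  carrier := {g | ∀ x y, (g : Matrix (Fin d) (Fin d) ℚ_[p]).mulVec (b x y)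
      = b ((g : Matrix (Fin d) (Fin d) ℚ_[p]).mulVec x)
          ((g : Matrix (Fin d) (Fin d) ℚ_[p]).mulVec y)}
  one_mem' := by
    intro x y
    simp [Matrix.one_mulVec]
  mul_mem' := by
    intro a c ha hc x y
    simp only [Units.val_mul, ← Matrix.mulVec_mulVec]
    rw [hc x y, ha]
  inv_mem' := by
    intro a ha x y
    have inva : ∀ v, (a : Matrix (Fin d) (Fin d) ℚ_[p]).mulVec
        (((a⁻¹ : GL (Fin d) ℚ_[p]) : Matrix (Fin d) (Fin d) ℚ_[p]).mulVec v) = v := by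
      intro v
      rw [Matrix.mulVec_mulVec]
      have h1 : (a : Matrix (Fin d) (Fin d) ℚ_[p]) *
          ((a⁻¹ : GL (Fin d) ℚ_[p]) : Matrix (Fin d) (Fin d) ℚ_[p]) = 1 := by
        rw [← Units.val_mul, mul_inv_cancel, Units.val_one]
      rw [h1, Matrix.one_mulVec]
    have ainv : ∀ v, ((a⁻¹ : GL (Fin d) ℚ_[p]) : Matrix (Fin d) (Fin d) ℚ_[p]).mulVec
        ((a : Matrix (Fin d) (Fin d) ℚ_[p]).mulVec v) = v := by
      intro v
      rw [Matrix.mulVec_mulVec]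
      have h1 : ((a⁻¹ : GL (Fin d) ℚ_[p]) : Matrix (Fin d) (Fin d) ℚ_[p]) *
          (a : Matrix (Fin d) (Fin d) ℚ_[p]) = 1 := by
        rw [← Units.val_mul, inv_mul_cancel, Units.val_one]
      rw [h1, Matrix.one_mulVec]
    conv_lhs => rw [show b x y = (a : Matrix (Fin d) (Fin d) ℚ_[p]).mulVec
      (b (((a⁻¹ : GL (Fin d) ℚ_[p]) : Matrix (Fin d) (Fin d) ℚ_[p]).mulVec x)
         (((a⁻¹ : GL (Fin d) ℚ_[p]) : Matrix (Fin d) (Fin d) ℚ_[p]).mulVec y)) from by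
        rw [ha]; rw [inva, inva]]
    rw [ainv]

/-- `Q` is isomorphic (as a topological group) to a compact open subgroup of `Aut(𝔰)`
for some simple `p`-adic Lie algebra `𝔰`. -/
def IsoToCompactOpenLieAut (p : ℕ) [Fact p.Prime] (Q : Type*) [Group Q]
    [TopologicalSpace Q] : Prop :=
  ∃ (m : ℕ) (_ : LieRing (Fin m → ℚ_[p])) (_ : LieAlgebra ℚ_[p] (Fin m → ℚ_[p])),
    LieAlgebra.IsSimple ℚ_[p] (Fin m → ℚ_[p]) ∧
    ∃ H : Subgroup (autGroupOfBracket (fun x y : Fin m → ℚ_[p] => ⁅x, y⁆)),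
      IsOpen (H : Set (autGroupOfBracket (fun x y : Fin m → ℚ_[p] => ⁅x, y⁆))) ∧
      CompactSpace H ∧ TopGrpIso Q H

/-- `Q` is isomorphic (as a topological group) to an open subgroup of `Aut(𝔰)`
for some simple `p`-adic Lie algebra `𝔰`. -/
def IsoToOpenLieAut (p : ℕ) [Fact p.Prime] (Q : Type*) [Group Q]
    [TopologicalSpace Q] : Prop :=
  ∃ (m : ℕ) (_ : LieRing (Fin m → ℚ_[p])) (_ : LieAlgebra ℚ_[p] (Fin m → ℚ_[p])),
    LieAlgebra.IsSimple ℚ_[p] (Fin m → ℚ_[p]) ∧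
    ∃ H : Subgroup (autGroupOfBracket (fun x y : Fin m → ℚ_[p] => ⁅x, y⁆)),
      IsOpen (H : Set (autGroupOfBracket (fun x y : Fin m → ℚ_[p] => ⁅x, y⁆))) ∧
      TopGrpIso Q H

/-! ### Elementary groups and the construction rank -/

/-- Totally disconnected, locally compact, second countable topological group. -/
def TDLCSC (G : Type u) [Group G] [TopologicalSpace G] : Prop :=
  IsTopologicalGroup G ∧ LocallyCompactSpace G ∧ T2Space G ∧ TotallyDisconnectedSpace G ∧
    SecondCountableTopology G

/-- The class `Σ₀`: countable discrete groups and metrizable profinite groups. -/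
def SigmaZero (G : Type u) [Group G] [TopologicalSpace G] : Prop :=
  TDLCSC G ∧ ((Countable G ∧ DiscreteTopology G) ∨
    (CompactSpace G ∧ T2Space G ∧ TotallyDisconnectedSpace G ∧
      TopologicalSpace.MetrizableSpace G))

/-- The classes `Σ_λ` of Wesolek's construction rank: `Σ₀` consists of countable discrete
and metrizable profinite groups, `Σ_{μ+1}` is obtained from `Σ_μ` by extensions with
quotient in `Σ₀` and by countable ascending unions of open subgroups, and limit stages
are unions of the previous stages. -/
inductive SigmaClass : Ordinal.{u} → ∀ (G : Type u) [Group G] [TopologicalSpace G], Prop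
  | base (o : Ordinal.{u}) (G : Type u) [Group G] [TopologicalSpace G] :
      SigmaZero G → SigmaClass o G
  | ext (o : Ordinal.{u}) (G : Type u) [Group G] [TopologicalSpace G]
      (N : Subgroup G) (hN : N.Normal) : TDLCSC G → IsClosed (N : Set G) →
      SigmaClass o N → SigmaZero (G ⧸ N) → SigmaClass (o + 1) G
  | union (o : Ordinal.{u}) (G : Type u) [Group G] [TopologicalSpace G] (V : ℕ → Subgroup G) :
      TDLCSC G → Monotone V → (∀ n, IsOpen ((V n : Set G))) → (∀ x : G, ∃ n, x ∈ V n) →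
      (∀ n, SigmaClass o (V n)) → SigmaClass (o + 1) G
  | mono (o o' : Ordinal.{u}) (G : Type u) [Group G] [TopologicalSpace G] :
      o ≤ o' → SigmaClass o G → SigmaClass o' G

/-- A topological group is elementary if it lies in some class `Σ_λ`. -/
def IsElementary (G : Type u) [Group G] [TopologicalSpace G] : Prop :=
  ∃ o : Ordinal.{u}, SigmaClass o G

/-- The construction rank: the least `λ` with `G ∈ Σ_λ`. -/
noncomputable def erk (G : Type u) [Group G] [TopologicalSpace G] : Ordinal.{u} :=
  sInf {o : Ordinal.{u} | SigmaClass o G}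

/-- The "exactly one" alternative for the subfactors in Theorem B. -/
def TheoremBAlternative (p : ℕ) [Fact p.Prime] (Q : Type*) [Group Q] [TopologicalSpace Q] :
    Prop :=
  ExactlyOne4
    (Countable Q ∧ DiscreteTopology Q)
    (TopGrpIso Q (Multiplicative ℤ_[p]))
    ((∃ hQ : PadicLieGroup p Q, hQ.Extraordinary) ∧ SigmaCompactSpace Q)
    (IsoToCompactOpenLieAut p Q)

/-!
Let `f : G → GL_n(K)` be the inclusion. For a subgroup `U ≤ G`, the intersection of `G` with
the Zariski closure of `U` is again a subgroup, and commutators of such closures lie in the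
closures of commutators; since points are Zariski closed, this subgroup is soluble (nilpotent)
whenever `U` is. The Zariski topology is Noetherian, so among the open subgroups `U` of a given
open soluble (nilpotent) subgroup we may choose one whose Zariski closure is minimal. Then
`U ∩ γ⁻¹Uγ`, being open, has the same Zariski closure as `U` for every `γ ∈ G`, so that closure is
normalised by `G`; its intersection with `G` is the required open normal subgroup.
-/

section SemitopologicalClosure

open scoped commutatorElement

variable {H : Type*} [Group H] [TopologicalSpace H] [SeparatelyContinuousMul H] [ContinuousInv H]

/-- Unlike `Subgroup.topologicalClosure`, this does not need jointly continuous multiplication,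
which the Zariski topology lacks. -/
def Subgroup.semitopologicalClosure (S : Subgroup H) : Subgroup H :=
  { S.toSubmonoid.topologicalClosure with
    inv_mem' := fun {g} hg => by
      change g⁻¹ ∈ _root_.closure (S : Set H)
      rwa [← Set.mem_inv, inv_closure, inv_coe_set] }

theorem Subgroup.coe_semitopologicalClosure (S : Subgroup H) :
    (S.semitopologicalClosure : Set H) = _root_.closure (S : Set H) := rfl

theorem Subgroup.commutator_semitopologicalClosure_le
    (hcomm : ∀ a : H, Continuous fun g : H => ⁅g, a⁆) (A B : Subgroup H) :
    ⁅A.semitopologicalClosure, B.semitopologicalClosure⁆ ≤ ⁅A, B⁆.semitopologicalClosure := by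
  rw [Subgroup.commutator_le]
  have hA : ∀ a ∈ A, ∀ y ∈ B.semitopologicalClosure, ⁅a, y⁆ ∈ ⁅A, B⁆.semitopologicalClosure := by
    intro a ha y hy
    rw [← commutatorElement_inv]
    refine map_mem_closure (f := fun g => ⁅g, a⁆⁻¹) (hcomm a).inv hy fun b hb => ?_
    change ⁅b, a⁆⁻¹ ∈ ⁅A, B⁆
    rw [commutatorElement_inv]
    exact commutator_mem_commutator ha hb
  intro x hx y hy
  rw [SetLike.mem_coe.symm, coe_semitopologicalClosure, ← closure_closure]
  exact map_mem_closure (f := fun g => ⁅g, y⁆) (hcomm y) hx fun a ha => hA a ha y hy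

variable {Γ : Type*} [Group Γ]

/-- For `Γ ≤ GL_n(K)` and `f` the inclusion into `ZariskiGL n K`, this is the intersection of `Γ`
with the Zariski closure of `U`. -/
def Subgroup.pullbackClosure (f : Γ →* H) (U : Subgroup Γ) : Subgroup Γ :=
  (U.map f).semitopologicalClosure.comap f

namespace Subgroup

variable {f : Γ →* H}

theorem mem_pullbackClosure {U : Subgroup Γ} {x : Γ} :
    x ∈ U.pullbackClosure f ↔ f x ∈ _root_.closure (f '' U) := Iff.rfl

theorem le_pullbackClosure (U : Subgroup Γ) : U ≤ U.pullbackClosure f :=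
  fun _ hx => mem_pullbackClosure.2 (_root_.subset_closure (Set.mem_image_of_mem f hx))

theorem commutator_pullbackClosure_le (hcomm : ∀ a : H, Continuous fun g : H => ⁅g, a⁆)
    (A B : Subgroup Γ) : ⁅A.pullbackClosure f, B.pullbackClosure f⁆ ≤ ⁅A, B⁆.pullbackClosure f := by
  refine map_le_iff_le_comap.1 ?_
  rw [map_commutator, map_commutator]
  exact (commutator_mono (map_comap_le _ _) (map_comap_le _ _)).trans
    (commutator_semitopologicalClosure_le hcomm _ _)

theorem pullbackClosure_bot [T1Space H] (hf : Function.Injective f) :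
    (⊥ : Subgroup Γ).pullbackClosure f = ⊥ := by
  ext x
  simp [mem_pullbackClosure, map_eq_one_iff f hf]

def derivedSeries (S : Subgroup Γ) : ℕ → Subgroup Γ
  | 0 => S
  | k + 1 => ⁅S.derivedSeries k, S.derivedSeries k⁆

theorem map_subtype_derivedSeries (S : Subgroup Γ) (k : ℕ) :
    (_root_.derivedSeries S k).map S.subtype = S.derivedSeries k := by
  induction k with
  | zero => rw [derivedSeries_zero, ← MonoidHom.range_eq_map, range_subtype]; rfl
  | succ k ih => rw [derivedSeries_succ, map_commutator, ih]; rfl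

theorem isSolvable_iff_derivedSeries (S : Subgroup Γ) :
    Group.IsSolvable S ↔ ∃ k, S.derivedSeries k = ⊥ := by
  rw [Group.isSolvable_def]
  refine exists_congr fun k => ?_
  rw [← map_subtype_derivedSeries, map_eq_bot_iff_of_injective _ S.subtype_injective]

theorem derivedSeries_pullbackClosure_le (hcomm : ∀ a : H, Continuous fun g : H => ⁅g, a⁆)
    (U : Subgroup Γ) (k : ℕ) :
    (U.pullbackClosure f).derivedSeries k ≤ (U.derivedSeries k).pullbackClosure f := by
  induction k with
  | zero => exact le_rfl
  | succ k ih => exact (commutator_mono ih ih).trans (commutator_pullbackClosure_le hcomm _ _)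

theorem lowerCentralSeries_pullbackClosure_le (hcomm : ∀ a : H, Continuous fun g : H => ⁅g, a⁆)
    (U : Subgroup Γ) (k : ℕ) :
    (U.pullbackClosure f).lowerCentralSeries k ≤ (U.lowerCentralSeries k).pullbackClosure f := by
  induction k with
  | zero => exact le_rfl
  | succ k ih => exact (commutator_mono ih le_rfl).trans (commutator_pullbackClosure_le hcomm _ _)

theorem isSolvable_pullbackClosure [T1Space H] (hcomm : ∀ a : H, Continuous fun g : H => ⁅g, a⁆)
    (hf : Function.Injective f) {U : Subgroup Γ} (hU : Group.IsSolvable U) :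
    Group.IsSolvable (U.pullbackClosure f) := by
  obtain ⟨k, hk⟩ := (isSolvable_iff_derivedSeries U).1 hU
  refine (isSolvable_iff_derivedSeries _).2 ⟨k, ?_⟩
  simpa [hk, pullbackClosure_bot hf] using derivedSeries_pullbackClosure_le (f := f) hcomm U k

theorem isNilpotent_pullbackClosure [T1Space H] (hcomm : ∀ a : H, Continuous fun g : H => ⁅g, a⁆)
    (hf : Function.Injective f) {U : Subgroup Γ} (hU : Group.IsNilpotent U) :
    Group.IsNilpotent (U.pullbackClosure f) := by
  obtain ⟨k, hk⟩ := (isNilpotent_iff_lowerCentralSeries U).1 hU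
  refine (isNilpotent_iff_lowerCentralSeries _).2 ⟨k, ?_⟩
  simpa [hk, pullbackClosure_bot hf] using lowerCentralSeries_pullbackClosure_le (f := f) hcomm U k

end Subgroup

end SemitopologicalClosure

section NoetherianClosure

open TopologicalSpace
open scoped commutatorElement

variable {Γ H : Type*} [Group Γ] [TopologicalSpace Γ] [IsTopologicalGroup Γ]
  [Group H] [TopologicalSpace H] [SeparatelyContinuousMul H] [ContinuousInv H]

theorem Subgroup.exists_le_isOpen_normal_pullbackClosure [NoetherianSpace H] (f : Γ →* H)
    {V : Subgroup Γ} (hV : IsOpen (V : Set Γ)) :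
    ∃ U ≤ V, IsOpen (U : Set Γ) ∧ (U.pullbackClosure f).Normal := by
  obtain ⟨_, ⟨U, ⟨hUV, hU⟩, rfl⟩, hmin⟩ := wellFounded_lt.has_min
    ((fun U : Subgroup Γ => Closeds.closure (f '' U)) '' {U | U ≤ V ∧ IsOpen (U : Set Γ)})
    ⟨_, V, ⟨le_rfl, hV⟩, rfl⟩
  refine ⟨U, hUV, hU, ⟨fun x hx γ => ?_⟩⟩
  let U' := U ⊓ U.comap (MulAut.conj γ).toMonoidHom
  have hU' : IsOpen (U' : Set Γ) :=
    hU.inter (hU.preimage ((continuous_mul_const γ⁻¹).comp (continuous_const_mul γ)))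
  have hclosure : Closeds.closure (f '' U') = Closeds.closure (f '' U) :=
    eq_of_le_of_not_lt (_root_.closure_mono (Set.image_mono inf_le_left))
      (hmin _ ⟨U', ⟨inf_le_left.trans hUV, hU'⟩, rfl⟩)
  have hx' : f x ∈ _root_.closure (f '' U') := by
    rw [← Closeds.coe_closure, hclosure, Closeds.coe_closure]
    exact Subgroup.mem_pullbackClosure.1 hx
  rw [Subgroup.mem_pullbackClosure, map_mul, map_mul, map_inv]
  refine map_mem_closure (f := fun h => f γ * h * (f γ)⁻¹)
    ((continuous_mul_const _).comp (continuous_const_mul _)) hx' ?_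
  rintro _ ⟨u, hu, rfl⟩
  exact ⟨γ * u * γ⁻¹, hu.2, by simp⟩

variable [NoetherianSpace H] [T1Space H] {f : Γ →* H}

theorem exists_isOpen_normal_isSolvable_of_injective
    (hcomm : ∀ a : H, Continuous fun g : H => ⁅g, a⁆) (hf : Function.Injective f)
    {V : Subgroup Γ} (hV : IsOpen (V : Set Γ)) (hVs : Group.IsSolvable V) :
    ∃ N : Subgroup Γ, N.Normal ∧ IsOpen (N : Set Γ) ∧ Group.IsSolvable N := by
  obtain ⟨U, hUV, hU, hN⟩ := Subgroup.exists_le_isOpen_normal_pullbackClosure f hV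
  have hUs : Group.IsSolvable U :=
    Group.isSolvable_of_isSolvable_injective (Subgroup.inclusion_injective hUV)
  exact ⟨_, hN, Subgroup.isOpen_mono (Subgroup.le_pullbackClosure U) hU,
    Subgroup.isSolvable_pullbackClosure hcomm hf hUs⟩

theorem exists_isOpen_normal_isNilpotent_of_injective
    (hcomm : ∀ a : H, Continuous fun g : H => ⁅g, a⁆) (hf : Function.Injective f)
    {V : Subgroup Γ} (hV : IsOpen (V : Set Γ)) (hVn : Group.IsNilpotent V) :
    ∃ N : Subgroup Γ, N.Normal ∧ IsOpen (N : Set Γ) ∧ Group.IsNilpotent N := by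
  obtain ⟨U, hUV, hU, hN⟩ := Subgroup.exists_le_isOpen_normal_pullbackClosure f hV
  have hUn : Group.IsNilpotent U := by
    obtain ⟨k, hk⟩ := (Subgroup.isNilpotent_iff_lowerCentralSeries V).1 hVn
    exact (Subgroup.isNilpotent_iff_lowerCentralSeries U).2
      ⟨k, le_bot_iff.1 (hk ▸ Subgroup.lowerCentralSeries_mono k hUV)⟩
  exact ⟨_, hN, Subgroup.isOpen_mono (Subgroup.le_pullbackClosure U) hU,
    Subgroup.isNilpotent_pullbackClosure hcomm hf hUn⟩

end NoetherianClosure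

section ZariskiTopology

open MvPolynomial TopologicalSpace
open scoped commutatorElement

theorem MvPolynomial.pointToPoint_injective {K σ : Type*} [Field K] :
    Function.Injective (pointToPoint (k := K) : (σ → K) → PrimeSpectrum (MvPolynomial σ K)) := by
  intro x y hxy
  funext i
  have hx : X i - C (x i) ∈ (pointToPoint (k := K) x).asIdeal := by
    simp [pointToPoint]
  rw [hxy] at hx
  simpa [pointToPoint, sub_eq_zero, eq_comm] using hx

/-- `GL_n(K)` with the Zariski topology: closed sets are cut out by polynomials in the entries
of `g` and of `g⁻¹`. -/
def ZariskiGL (n : ℕ) (K : Type*) [Field K] : Type _ := GL (Fin n) K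

namespace ZariskiGL

variable {n : ℕ} {K : Type*} [Field K]

instance : Group (ZariskiGL n K) := inferInstanceAs (Group (GL (Fin n) K))

def ofGL : GL (Fin n) K ≃* ZariskiGL n K := MulEquiv.refl _

abbrev Coord (n : ℕ) := (Fin n × Fin n) ⊕ (Fin n × Fin n)

/-- The entries of `g` (left summand) and of `g⁻¹` (right summand); with the latter, inversion
is a polynomial map. -/
def coords (g : ZariskiGL n K) : Coord n → K :=
  Sum.elim (fun ij => (ofGL.symm g : Matrix (Fin n) (Fin n) K) ij.1 ij.2)
    (fun ij => ((ofGL.symm g)⁻¹ : GL (Fin n) K) ij.1 ij.2)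

theorem coords_injective : Function.Injective (coords (n := n) (K := K)) := fun _ _ hgh =>
  ofGL.symm.injective <| Units.ext <| Matrix.ext fun i j => congrFun hgh (.inl (i, j))

theorem coords_mul_inl (g h : ZariskiGL n K) (i j : Fin n) :
    coords (g * h) (.inl (i, j)) = ∑ k, coords g (.inl (i, k)) * coords h (.inl (k, j)) := by
  simp [coords, Matrix.mul_apply]

theorem coords_mul_inr (g h : ZariskiGL n K) (i j : Fin n) :
    coords (g * h) (.inr (i, j)) = ∑ k, coords h (.inr (i, k)) * coords g (.inr (k, j)) := by
  simp [coords, Matrix.mul_apply]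

theorem coords_inv (g : ZariskiGL n K) (c : Coord n) : coords g⁻¹ c = coords g c.swap := by
  rcases c with c | c <;> simp [coords]

def IsPolynomialMap (φ : ZariskiGL n K → ZariskiGL n K) : Prop :=
  ∃ q : Coord n → MvPolynomial (Coord n) K, ∀ g, coords (φ g) = fun c => eval (coords g) (q c)

theorem isPolynomialMap_id : IsPolynomialMap (id : ZariskiGL n K → ZariskiGL n K) :=
  ⟨X, fun _ => by simp⟩

theorem isPolynomialMap_const (a : ZariskiGL n K) : IsPolynomialMap fun _ => a :=
  ⟨fun c => C (coords a c), fun _ => by simp⟩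

theorem IsPolynomialMap.mul {φ ψ : ZariskiGL n K → ZariskiGL n K} (hφ : IsPolynomialMap φ)
    (hψ : IsPolynomialMap ψ) : IsPolynomialMap fun g => φ g * ψ g := by
  obtain ⟨p, hp⟩ := hφ
  obtain ⟨q, hq⟩ := hψ
  refine ⟨Sum.elim (fun ij => ∑ k, p (.inl (ij.1, k)) * q (.inl (k, ij.2)))
    (fun ij => ∑ k, q (.inr (ij.1, k)) * p (.inr (k, ij.2))), ?_⟩
  intro g
  funext c
  rcases c with ⟨i, j⟩ | ⟨i, j⟩ <;> simp [coords_mul_inl, coords_mul_inr, hp, hq]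

theorem IsPolynomialMap.inv {φ : ZariskiGL n K → ZariskiGL n K} (hφ : IsPolynomialMap φ) :
    IsPolynomialMap fun g => (φ g)⁻¹ := by
  obtain ⟨q, hq⟩ := hφ
  exact ⟨q ∘ Sum.swap, fun g => funext fun c => by rw [coords_inv, hq]; rfl⟩

noncomputable def toPrimeSpectrum (g : ZariskiGL n K) :
    PrimeSpectrum (MvPolynomial (Coord n) K) :=
  pointToPoint (k := K) (coords g)

theorem toPrimeSpectrum_injective : Function.Injective (toPrimeSpectrum (n := n) (K := K)) :=
  pointToPoint_injective.comp coords_injective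

/-- Inducing the topology from `Spec K[Coord n]` makes it Noetherian for free. -/
noncomputable instance : TopologicalSpace (ZariskiGL n K) := .induced toPrimeSpectrum inferInstance

instance : NoetherianSpace (ZariskiGL n K) :=
  (Topology.IsInducing.induced toPrimeSpectrum).noetherianSpace

instance : T1Space (ZariskiGL n K) where
  t1 g := by
    have hg : ({g} : Set (ZariskiGL n K)) = toPrimeSpectrum ⁻¹' {toPrimeSpectrum g} := by
      ext h
      simp [toPrimeSpectrum_injective.eq_iff]
    rw [hg]
    exact ((PrimeSpectrum.isClosed_singleton_iff_isMaximal _).2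
      (inferInstanceAs (vanishingIdeal K {coords g}).IsMaximal)).preimage continuous_induced_dom

theorem IsPolynomialMap.continuous {φ : ZariskiGL n K → ZariskiGL n K} (hφ : IsPolynomialMap φ) :
    Continuous φ := by
  obtain ⟨q, hq⟩ := hφ
  have hcomap :
      toPrimeSpectrum ∘ φ = PrimeSpectrum.comap (bind₁ q).toRingHom ∘ toPrimeSpectrum := by
    funext g
    ext p
    simp [toPrimeSpectrum, pointToPoint, aeval_bind₁, hq]
  rw [continuous_induced_rng, hcomap]
  exact (PrimeSpectrum.continuous_comap _).comp continuous_induced_dom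

instance : SeparatelyContinuousMul (ZariskiGL n K) where
  continuous_const_mul := ((isPolynomialMap_const _).mul isPolynomialMap_id).continuous
  continuous_mul_const := (isPolynomialMap_id.mul (isPolynomialMap_const _)).continuous

instance : ContinuousInv (ZariskiGL n K) := ⟨isPolynomialMap_id.inv.continuous⟩

theorem continuous_commutatorElement_const (a : ZariskiGL n K) :
    Continuous fun g : ZariskiGL n K => ⁅g, a⁆ := by
  simp only [commutatorElement_def]
  exact (((isPolynomialMap_id.mul (isPolynomialMap_const a)).mul isPolynomialMap_id.inv).mul
    (isPolynomialMap_const a⁻¹)).continuous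

end ZariskiGL

end ZariskiTopology

theorem stmt3_general (K : Type*) [Field K] (n : ℕ) (G : Subgroup (GL (Fin n) K))
    [TopologicalSpace G] [IsTopologicalGroup G] :
    ((∃ V : Subgroup G, IsOpen (V : Set G) ∧ IsSolvable V) →
      ∃ N : Subgroup G, N.Normal ∧ IsOpen (N : Set G) ∧ IsSolvable N) ∧
    ((∃ V : Subgroup G, IsOpen (V : Set G) ∧ Group.IsNilpotent V) →
      ∃ N : Subgroup G, N.Normal ∧ IsOpen (N : Set G) ∧ Group.IsNilpotent N) := by
  have hf : Function.Injective (ZariskiGL.ofGL.toMonoidHom.comp G.subtype) :=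
    ZariskiGL.ofGL.injective.comp G.subtype_injective
  exact ⟨fun ⟨V, hV, hVs⟩ => exists_isOpen_normal_isSolvable_of_injective
      ZariskiGL.continuous_commutatorElement_const hf hV hVs,
    fun ⟨V, hV, hVn⟩ => exists_isOpen_normal_isNilpotent_of_injective
      ZariskiGL.continuous_commutatorElement_const hf hV hVn⟩

/-- Lemma 1.4: open soluble (resp. nilpotent) subgroups of linear groups
yield open normal ones. -/
theorem stmt3 (K : Type*) [Field K] [Infinite K] (n : ℕ) (G : Subgroup (GL (Fin n) K))
    [TopologicalSpace G] [IsTopologicalGroup G] :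
    ((∃ V : Subgroup G, IsOpen (V : Set G) ∧ IsSolvable V) →
      ∃ N : Subgroup G, N.Normal ∧ IsOpen (N : Set G) ∧ IsSolvable N) ∧
    ((∃ V : Subgroup G, IsOpen (V : Set G) ∧ Group.IsNilpotent V) →
      ∃ N : Subgroup G, N.Normal ∧ IsOpen (N : Set G) ∧ Group.IsNilpotent N) :=
  stmt3_general K n G
end

section
/- If V is an open subgroup of a topological group G and V is nearly simple, then G is nearly simple. -/
open scoped Manifold
open Matrix

universe u

variable {p : ℕ} [Fact p.Prime] {G : Type*} [Group G] [TopologicalSpace G]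

/-!
Subnormality and closedness pass from `S` to `S ∩ V`, so `S ∩ V` is open or discrete in `V`.
Since `V` is open, `S ∩ V` is then an open subgroup of `G` contained in `S`, or an open discrete
neighbourhood of `1` in `S`; either way `S` is open or discrete.
-/

theorem IsSubnormal.comap {G H : Type*} [Group G] [Group H] {S : Subgroup G}
    (hS : IsSubnormal S) (f : H →* G) : IsSubnormal (S.comap f) := by
  obtain ⟨k, c, h0, hk, hle, hnormal⟩ := hS
  refine ⟨k, fun i => (c i).comap f, by simp [h0], by simp [hk],
    fun i => Subgroup.comap_mono (hle i), fun i x hx y hy => ?_⟩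
  simpa using hnormal i (f x) hx (f y) hy

namespace Subgroup

open Topology

variable {G : Type*} [Group G] [TopologicalSpace G] {S V : Subgroup G}

theorem isOpen_of_isOpen_subgroupOf [SeparatelyContinuousMul G] (hV : IsOpen (V : Set G))
    (hSV : IsOpen (S.subgroupOf V : Set V)) : IsOpen (S : Set G) := by
  have hinf : IsOpen ((S ⊓ V : Subgroup G) : Set G) := by
    rw [← subgroupOf_map_subtype, coe_map]
    exact hV.isOpenMap_subtype_val _ hSV
  exact isOpen_mono inf_le_left hinf

theorem discreteTopology_of_subgroupOf [IsTopologicalGroup G] (hV : IsOpen (V : Set G))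
    [DiscreteTopology (S.subgroupOf V)] : DiscreteTopology S := by
  let f : S.subgroupOf V → S := fun t => ⟨t.1.1, t.2⟩
  have hf : IsOpenEmbedding f := by
    refine ⟨?_, ?_⟩
    · rw [← IsEmbedding.subtypeVal.of_comp_iff]
      exact (IsEmbedding.subtypeVal.comp IsEmbedding.subtypeVal :
        IsEmbedding (Subtype.val ∘ Subtype.val : S.subgroupOf V → G))
    · have hrange : Set.range f = Subtype.val ⁻¹' (V : Set G) := by
        ext s
        exact ⟨fun ⟨t, ht⟩ => ht ▸ t.1.2, fun hs => ⟨⟨⟨s, hs⟩, s.2⟩, rfl⟩⟩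
      rw [hrange]
      exact hV.preimage continuous_subtype_val
  apply discreteTopology_of_isOpen_singleton_one
  have h1 := hf.isOpenMap {1} (isOpen_discrete _)
  rwa [Set.image_singleton] at h1

end Subgroup

/-- Lemma 2.7: a group with a nearly simple open subgroup is nearly
simple. -/
theorem stmt12 {G : Type*} [Group G] [TopologicalSpace G] [IsTopologicalGroup G]
    (V : Subgroup G) (hV : IsOpen (V : Set G)) (hns : NearlySimple V) :
    NearlySimple G := by
  intro S hS hSclosed
  have hSV : IsClosed (S.subgroupOf V : Set V) := hSclosed.preimage continuous_subtype_val
  rcases hns (S.subgroupOf V) (hS.comap V.subtype) hSV with hopen | _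
  · exact .inl (S.isOpen_of_isOpen_subgroupOf hV hopen)
  · exact .inr (S.discreteTopology_of_subgroupOf hV)
end

section
/- If a p-adic Lie group G is extraordinary, then the radical R(S) is discrete for every open subnormal subgroup S of G. -/
open scoped Manifold
open Matrix

universe u

variable {p : ℕ} [Fact p.Prime] {G : Type*} [Group G] [TopologicalSpace G]

/-!
Let `K` be a compact open subgroup of `G` with no non-trivial elements of finite order. It exists
because in the chart at `1` multiplication is addition to first order: if `x` is the coordinate
of `g ∈ K`, the ultrametric inequality gives that `g ^ q` has coordinate `q • x` up to `ε ‖x‖`,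
and `‖(q : ℚ_[p])‖ ≥ p⁻¹ > ε` for every prime `q`, so `g ^ q = 1` forces `g = 1`.

Any two elements `x, y` of `R(S)` lie in a soluble subgroup `N` normalised by `S`. The closures
of the derived series of `N` are closed subnormal subgroups of `G`, hence open or discrete. If
one of them is open, its commutator subgroup is not discrete and lies in the next closure, which
is therefore open too; since the series ends at `{1}` and `G` is not discrete, the closure of `N`
is discrete. Its intersection with `K` is compact and discrete, hence finite, so `x⁻¹ y ∈ K`
has finite order and `x = y`.
-/

open Topology Filter
open scoped commutatorElement

lemma isSubnormal_top {G : Type*} [Group G] : IsSubnormal (⊤ : Subgroup G) :=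
  ⟨0, fun _ => ⊤, rfl, rfl, fun _ => le_rfl, fun _ _ _ _ _ => Subgroup.mem_top _⟩

lemma IsSubnormal.of_le_of_le_normalizer {G : Type*} [Group G] {S T : Subgroup G}
    (hS : IsSubnormal S) (hTS : T ≤ S) (hST : S ≤ Subgroup.normalizer (T : Set G)) :
    IsSubnormal T := by
  obtain ⟨k, c, hc0, hck, hanti, hconj⟩ := hS
  have hconjT := Subgroup.le_normalizer_iff.mp hST
  refine ⟨k + 1, fun i => if i ≤ k then c i else T, by simp [hc0], by simp, fun i => ?_,
    fun i => ?_⟩ <;> dsimp only <;> split_ifs with h₁ h₂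
  · exact hanti i
  · omega
  · obtain rfl : i = k := by omega
    rwa [hck]
  · exact le_rfl
  · exact hconj i
  · obtain rfl : i = k := by omega
    rwa [hck]
  · omega
  · exact fun x hx => hconjT x (hTS hx)

lemma Subgroup.le_normalizer_commutator {G : Type*} [Group G] {K H₁ H₂ : Subgroup G}
    (h₁ : K ≤ Subgroup.normalizer (H₁ : Set G)) (h₂ : K ≤ Subgroup.normalizer (H₂ : Set G)) :
    K ≤ Subgroup.normalizer ((⁅H₁, H₂⁆ : Subgroup G) : Set G) := fun g hg => by
  rw [Subgroup.mem_normalizer_iff_map_conj_eq, Subgroup.map_commutator,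
    Subgroup.mem_normalizer_iff_map_conj_eq.mp (h₁ hg),
    Subgroup.mem_normalizer_iff_map_conj_eq.mp (h₂ hg)]

lemma Subgroup.isSolvable_sup {G : Type*} [Group G] (H N : Subgroup G) [N.Normal]
    [Group.IsSolvable H] [Group.IsSolvable N] : Group.IsSolvable ↥(H ⊔ N) := by
  have : Group.IsSolvable ↥(N.subgroupOf (H ⊔ N)) :=
    Group.isSolvable_of_isSolvable_injective
      (f := (Subgroup.subgroupOfEquivOfLe (le_sup_right : N ≤ H ⊔ N)).toMonoidHom)
      (Subgroup.subgroupOfEquivOfLe (le_sup_right : N ≤ H ⊔ N)).injective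
  have : Group.IsSolvable (↥(H ⊔ N) ⧸ N.subgroupOf (H ⊔ N)) :=
    Group.isSolvable_of_surjective
      (f := (QuotientGroup.quotientInfEquivProdNormalQuotient H N).toMonoidHom)
      (QuotientGroup.quotientInfEquivProdNormalQuotient H N).surjective
  exact (Group.isSolvable_iff_subgroup_quotient (N.subgroupOf (H ⊔ N))).mpr ⟨‹_›, ‹_›⟩

lemma exists_isSolvable_mem_of_mem_radicalSet {G : Type*} [Group G] {S : Subgroup G} {x y : S}
    (hx : x ∈ radicalSet S) (hy : y ∈ radicalSet S) :
    ∃ N : Subgroup G, N ≤ S ∧ S ≤ Subgroup.normalizer (N : Set G) ∧ Group.IsSolvable N ∧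
      (x : G) ∈ N ∧ (y : G) ∈ N := by
  obtain ⟨N₁, ⟨hN₁, hN₁s⟩, hx₁⟩ := Set.mem_iUnion₂.mp hx
  obtain ⟨N₂, ⟨hN₂, hN₂s⟩, hy₂⟩ := Set.mem_iUnion₂.mp hy
  have : Group.IsSolvable ↥N₁ := hN₁s
  have : Group.IsSolvable ↥N₂ := hN₂s
  set M := N₂ ⊔ N₁
  have : Group.IsSolvable ↥M := Subgroup.isSolvable_sup N₂ N₁
  have : M.Normal := Subgroup.sup_normal N₂ N₁
  refine ⟨M.map S.subtype, Subgroup.map_subtype_le _, ?_,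
    Group.isSolvable_of_surjective
      (f := (M.equivMapOfInjective _ S.subtype_injective).toMonoidHom)
      (M.equivMapOfInjective _ S.subtype_injective).surjective,
    ⟨x, Subgroup.mem_sup_right hx₁, rfl⟩, ⟨y, Subgroup.mem_sup_left hy₂, rfl⟩⟩
  calc S = (Subgroup.normalizer (M : Set S)).map S.subtype := by
        rw [Subgroup.normalizer_eq_top, ← MonoidHom.range_eq_map, Subgroup.range_subtype]
    _ ≤ _ := Subgroup.le_normalizer_map _

def HasNondiscreteCommutators (G : Type*) [Group G] [TopologicalSpace G] : Prop :=
  ∀ S : Subgroup G, IsSubnormal S → IsOpen (S : Set G) → ¬ DiscreteTopology (commutator S)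

lemma HasNondiscreteCommutators.not_discreteTopology (h : HasNondiscreteCommutators G) :
    ¬ DiscreteTopology G := fun _ => h ⊤ isSubnormal_top (by simp) inferInstance

lemma NearlySimple.isOpen_of_commutator_le (hns : NearlySimple G)
    (hcomm : HasNondiscreteCommutators G) {H K : Subgroup G} (hH : IsSubnormal H)
    (hHo : IsOpen (H : Set G)) (hK : IsSubnormal K) (hKc : IsClosed (K : Set G))
    (hHK : ⁅H, H⁆ ≤ K) : IsOpen (K : Set G) := by
  refine (hns K hK hKc).resolve_right fun _ => hcomm H hH hHo ?_
  have hmem (x : commutator H) : ((x : H) : G) ∈ K :=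
    hHK (H.map_subtype_commutator ▸ Subgroup.mem_map_of_mem H.subtype x.2)
  exact DiscreteTopology.of_continuous_injective (f := fun x => (⟨x, hmem x⟩ : K)) (by fun_prop)
    fun a b hab => Subtype.ext (Subtype.ext (Subtype.mk.inj hab))

lemma discreteTopology_of_inv_mul_mem {X : Type*} [TopologicalSpace X] [ContinuousMul G]
    {f : X → G} (hf : Continuous f) {U : Set G} (hU : IsOpen U) (h1 : (1 : G) ∈ U)
    (h : ∀ x y, (f x)⁻¹ * f y ∈ U → x = y) : DiscreteTopology X := by
  refine discreteTopology_iff_isOpen_singleton.mpr fun x => ?_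
  have : ({x} : Set X) = f ⁻¹' ((fun g => (f x)⁻¹ * g) ⁻¹' U) := by
    ext y
    exact ⟨fun hy => by simp [Set.mem_singleton_iff.mp hy, h1], fun hy => (h x y hy).symm⟩
  exact this ▸ (hU.preimage (by fun_prop)).preimage hf

lemma isOfFinOrder_of_mem_of_discreteTopology {H K : Subgroup G} [DiscreteTopology H]
    (hH : IsClosed (H : Set G)) (hK : IsCompact (K : Set G)) {g : G} (hgH : g ∈ H)
    (hgK : g ∈ K) : IsOfFinOrder g := by
  have : Finite ↥(H ⊓ K) := Set.Finite.to_subtype <| (hK.inter_left hH).finite <|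
    isDiscrete_iff_discreteTopology.mpr (DiscreteTopology.of_subset ‹_› Set.inter_subset_left)
  exact (H ⊓ K).subtype.isOfFinOrder (isOfFinOrder_of_finite (⟨g, hgH, hgK⟩ : ↥(H ⊓ K)))

section IsTopologicalGroup

variable [IsTopologicalGroup G]

lemma Subgroup.le_normalizer_topologicalClosure {K H : Subgroup G}
    (h : K ≤ Subgroup.normalizer (H : Set G)) :
    K ≤ Subgroup.normalizer (H.topologicalClosure : Set G) :=
  Subgroup.le_normalizer_iff.mpr fun k hk _ ht =>
    map_mem_closure (f := fun x => k * x * k⁻¹) (by fun_prop) ht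
      fun x hx => Subgroup.le_normalizer_iff.mp h k hk x hx

lemma Subgroup.commutator_topologicalClosure_le (H₁ H₂ : Subgroup G) :
    ⁅H₁.topologicalClosure, H₂.topologicalClosure⁆ ≤ ⁅H₁, H₂⁆.topologicalClosure :=
  Subgroup.commutator_le.mpr fun _ ha _ hb =>
    map_mem_closure₂ (f := fun a b => ⁅a, b⁆) (by simp only [commutatorElement_def]; fun_prop)
      ha hb fun _ hx _ hy => Subgroup.commutator_mem_commutator hx hy

theorem NearlySimple.discreteTopology_topologicalClosure_of_isSolvable [T1Space G]
    (hns : NearlySimple G) (hcomm : HasNondiscreteCommutators G) {S N : Subgroup G}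
    (hS : IsSubnormal S) (hSc : IsClosed (S : Set G)) (hNS : N ≤ S)
    (hSN : S ≤ Subgroup.normalizer (N : Set G)) [Group.IsSolvable N] :
    DiscreteTopology N.topologicalClosure := by
  set D : ℕ → Subgroup G := fun n => (derivedSeries N n).map N.subtype
  set T : ℕ → Subgroup G := fun n => (D n).topologicalClosure
  have hD0 : D 0 = N := by simp [D, ← MonoidHom.range_eq_map]
  have hD_succ (n : ℕ) : D (n + 1) = ⁅D n, D n⁆ := by
    simp only [D, derivedSeries_succ, Subgroup.map_commutator]
  have hSD (n : ℕ) : S ≤ Subgroup.normalizer (D n : Set G) := by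
    induction n with
    | zero => exact hD0 ▸ hSN
    | succ n ih => exact hD_succ n ▸ Subgroup.le_normalizer_commutator ih ih
  have hT (n : ℕ) : IsSubnormal (T n) := hS.of_le_of_le_normalizer
    ((D n).topologicalClosure_minimal ((Subgroup.map_subtype_le _).trans hNS) hSc)
    (Subgroup.le_normalizer_topologicalClosure (hSD n))
  have hTc (n : ℕ) : IsClosed (T n : Set G) := (D n).isClosed_topologicalClosure
  have hT_open (h0 : IsOpen (T 0 : Set G)) (n : ℕ) : IsOpen (T n : Set G) := by
    induction n with
    | zero => exact h0
    | succ n ih =>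
      exact hns.isOpen_of_commutator_le hcomm (hT n) ih (hT (n + 1)) (hTc (n + 1))
        (by simpa only [T, hD_succ] using Subgroup.commutator_topologicalClosure_le (D n) (D n))
  obtain ⟨n, hn⟩ := (Group.isSolvable_def N).mp ‹_›
  have hTn : (T n : Set G) = {1} := by simp [T, D, hn]
  refine hD0 ▸ (hns _ (hT 0) (hTc 0)).resolve_left fun h0 => hcomm.not_discreteTopology ?_
  exact discreteTopology_of_isOpen_singleton_one (hTn ▸ hT_open h0 n)

end IsTopologicalGroup

lemma ChartedSpace.exists_isCompact_isOpen_mem_subset {E M : Type*} [NormedAddCommGroup E]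
    [IsUltrametricDist E] [ProperSpace E] [TopologicalSpace M] [ChartedSpace E M] {x : M}
    {s : Set M} (hs : s ∈ 𝓝 x) : ∃ V, IsCompact V ∧ IsOpen V ∧ x ∈ V ∧ V ⊆ s := by
  set φ := chartAt E x
  have hx : x ∈ φ.source := mem_chart_source E x
  have hφx : φ x ∈ φ.target := φ.map_source hx
  have ht : φ.target ∩ φ.symm ⁻¹' s ∈ 𝓝 (φ x) := inter_mem (φ.open_target.mem_nhds hφx)
    ((φ.continuousAt_symm hφx).preimage_mem_nhds (by rwa [φ.left_inv hx]))
  obtain ⟨r, hr, hrt⟩ := Metric.nhds_basis_closedBall.mem_iff.mp ht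
  refine ⟨φ.symm '' Metric.closedBall (φ x) r,
    (isCompact_closedBall _ _).image_of_continuousOn
      (φ.continuousOn_symm.mono fun y hy => (hrt hy).1),
    φ.symm.isOpen_image_of_subset_source (IsUltrametricDist.isOpen_closedBall _ hr.ne')
      fun y hy => (hrt hy).1,
    ⟨φ x, Metric.mem_closedBall_self hr.le, φ.left_inv hx⟩, ?_⟩
  rintro _ ⟨y, hy, rfl⟩
  exact (hrt hy).2

section Stabilizer

open Pointwise

lemma stabilizer_subset_of_one_mem {G : Type*} [Group G] {V : Set G} (h1 : (1 : G) ∈ V) :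
    (MulAction.stabilizer G V : Set G) ⊆ V := fun g hg => by
  simpa [MulAction.mem_stabilizer_iff.mp hg] using Set.smul_mem_smul_set (a := g) h1

lemma isOpen_stabilizer_of_isCompact_of_isOpen [IsTopologicalGroup G] {V : Set G}
    (hc : IsCompact V) (ho : IsOpen V) : IsOpen (MulAction.stabilizer G V : Set G) := by
  obtain ⟨W, hW, hWV⟩ := compact_open_separated_mul_left hc ho subset_rfl
  have hsub {g : G} (hg : g ∈ W) : g • V ⊆ V := by
    rintro _ ⟨v, hv, rfl⟩
    exact hWV (Set.mul_mem_mul hg hv)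
  refine Subgroup.isOpen_of_mem_nhds _ (g := 1)
    (mem_of_superset (inter_mem hW (inv_mem_nhds_one G hW)) fun g hg => ?_)
  exact (hsub hg.1).antisymm (Set.subset_smul_set_iff.mpr (hsub hg.2))

end Stabilizer

lemma IsUltrametricDist.norm_sub_nsmul_le {E : Type*} [SeminormedAddCommGroup E]
    [IsUltrametricDist E] {y : ℕ → E} {x : E} {ε : ℝ} (hε : ε ≤ 1) (h0 : y 0 = 0)
    (hstep : ∀ m, ‖y m‖ ≤ ‖x‖ → ‖y (m + 1) - (y m + x)‖ ≤ ε * ‖x‖) (m : ℕ) :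
    ‖y m - m • x‖ ≤ ε * ‖x‖ := by
  induction m with
  | zero => simpa [h0] using (norm_nonneg _).trans (hstep 0 (by simp [h0]))
  | succ m ih =>
    have hym : ‖y m‖ ≤ ‖x‖ := calc
      ‖y m‖ = ‖(y m - m • x) + m • x‖ := by rw [sub_add_cancel]
      _ ≤ max ‖y m - m • x‖ ‖m • x‖ := norm_add_le_max _ _
      _ ≤ ‖x‖ :=
        max_le (ih.trans (mul_le_of_le_one_left (norm_nonneg x) hε)) (norm_nsmul_le x m)
    calc ‖y (m + 1) - (m + 1) • x‖ = ‖(y (m + 1) - (y m + x)) + (y m - m • x)‖ := by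
          rw [succ_nsmul]; abel_nf
      _ ≤ max ‖y (m + 1) - (y m + x)‖ ‖y m - m • x‖ := norm_add_le_max _ _
      _ ≤ ε * ‖x‖ := max_le (hstep m hym) ih

lemma Padic.inv_le_norm_natCast_of_prime {q : ℕ} (hq : q.Prime) :
    (p : ℝ)⁻¹ ≤ ‖(q : ℚ_[p])‖ := by
  rcases eq_or_ne q p with rfl | hqp
  · rw [Padic.norm_p]
  · rw [Padic.norm_natCast_eq_one_iff.mpr ((Nat.coprime_primes Fact.out hq).mpr hqp.symm)]
    exact inv_le_one_of_one_le₀ (mod_cast (Fact.out : p.Prime).one_le)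

lemma eq_one_of_isOfFinOrder_of_forall_prime {G : Type*} [Group G] {K : Subgroup G}
    (hK : ∀ g ∈ K, ∀ q : ℕ, q.Prime → g ^ q = 1 → g = 1) {g : G} (hg : g ∈ K)
    (hfin : IsOfFinOrder g) : g = 1 := by
  by_contra hne
  set m := orderOf g
  have hq : m.minFac.Prime := Nat.minFac_prime (by rwa [Ne, orderOf_eq_one_iff])
  have hpow : g ^ (m / m.minFac) = 1 := hK _ (pow_mem hg _) _ hq <| by
    rw [← pow_mul, Nat.div_mul_cancel (Nat.minFac_dvd m), pow_orderOf_eq_one]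
  have hm : 0 < m := hfin.orderOf_pos
  exact (Nat.div_lt_self hm hq.one_lt).not_ge
    (Nat.le_of_dvd (Nat.div_pos (Nat.minFac_le hm) hq.pos) (orderOf_dvd_of_pow_eq_one hpow))

section ChartAtOne

variable {E : Type*} [NormedAddCommGroup E] [ChartedSpace E G] {n : WithTop ℕ∞}

local notation "φ₁" => chartAt E (1 : G)

lemma hasFDerivAt_chartAt_one_mul (𝕜 : Type*) [NontriviallyNormedField 𝕜] [NormedSpace 𝕜 E]
    [LieGroup 𝓘(𝕜, E) n G] (hn : n ≠ 0) :
    HasFDerivAt (fun z : E × E => φ₁ ((φ₁).symm z.1 * (φ₁).symm z.2))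
      (ContinuousLinearMap.fst 𝕜 E E + ContinuousLinearMap.snd 𝕜 E E) (φ₁ 1, φ₁ 1) := by
  set I := 𝓘(𝕜, E)
  have hmul : MDifferentiableAt (I.prod I) I (fun z : G × G => z.1 * z.2) (1, 1) :=
    (contMDiff_mul I n).mdifferentiableAt hn
  have hderiv : mfderiv (I.prod I) I (fun z : G × G => z.1 * z.2) (1, 1) =
      ContinuousLinearMap.fst 𝕜 E E + ContinuousLinearMap.snd 𝕜 E E := by
    ext1 v
    erw [mfderiv_prod_eq_add_apply hmul]
    have hr : (fun z : G => z * 1) = id := funext mul_one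
    have hl : (fun z : G => 1 * z) = id := funext one_mul
    rw [hr, hl, mfderiv_id]
    rfl
  have h := (hderiv ▸ hmul.hasMFDerivAt).2
  rw [ModelWithCorners.range_eq_univ] at h
  exact (hasFDerivWithinAt_univ.mp h).congr_of_eventuallyEq
    (.of_forall fun _ => by simp only [writtenInExtChartAt, mul_one]; rfl)

lemma exists_mem_nhds_norm_chartAt_mul_sub_add_le (𝕜 : Type*) [NontriviallyNormedField 𝕜]
    [NormedSpace 𝕜 E] [LieGroup 𝓘(𝕜, E) n G] (hn : n ≠ 0) {ε : ℝ} (hε : 0 < ε) :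
    ∃ U ∈ 𝓝 (1 : G), ∀ a ∈ U, ∀ b ∈ U,
      ‖(φ₁ (a * b) - φ₁ 1) - ((φ₁ a - φ₁ 1) + (φ₁ b - φ₁ 1))‖ ≤
        ε * max ‖φ₁ a - φ₁ 1‖ ‖φ₁ b - φ₁ 1‖ := by
  have h1 : (1 : G) ∈ (φ₁).source := mem_chart_source E 1
  have hF := (hasFDerivAt_chartAt_one_mul (G := G) (E := E) 𝕜 hn).isLittleO.def hε
  have hφ : Tendsto (fun x : G × G => (φ₁ x.1, φ₁ x.2)) (𝓝 1 ×ˢ 𝓝 1) (𝓝 (φ₁ 1, φ₁ 1)) := by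
    rw [← nhds_prod_eq]
    exact ((φ₁).continuousAt h1).prodMap ((φ₁).continuousAt h1)
  have hsrc : ∀ᶠ x : G × G in 𝓝 1 ×ˢ 𝓝 1, x.1 ∈ (φ₁).source ∧ x.2 ∈ (φ₁).source :=
    prod_mem_prod ((φ₁).open_source.mem_nhds h1) ((φ₁).open_source.mem_nhds h1)
  obtain ⟨U, hU, hUest⟩ := mem_prod_self_iff.mp ((hφ.eventually hF).and hsrc)
  refine ⟨U, hU, fun a ha b hb => ?_⟩
  obtain ⟨hest, ha', hb'⟩ := hUest (Set.mk_mem_prod ha hb)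
  simpa [(φ₁).left_inv ha', (φ₁).left_inv hb', (φ₁).left_inv h1, Prod.norm_def] using hest

theorem exists_isOpen_isCompact_subgroup_torsionFree [NormedSpace ℚ_[p] E]
    [IsUltrametricDist E] [ProperSpace E] [LieGroup 𝓘(ℚ_[p], E) n G] (hn : n ≠ 0) :
    ∃ K : Subgroup G, IsOpen (K : Set G) ∧ IsCompact (K : Set G) ∧
      ∀ g ∈ K, IsOfFinOrder g → g = 1 := by
  have := topologicalGroup_of_lieGroup 𝓘(ℚ_[p], E) n (G := G)
  have hp : (1 : ℝ) ≤ p := mod_cast (Fact.out : p.Prime).one_le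
  obtain ⟨ε, hε, hεp⟩ := exists_between (inv_pos.mpr (zero_lt_one.trans_le hp))
  have hε1 : ε ≤ 1 := hεp.le.trans (inv_le_one_of_one_le₀ hp)
  obtain ⟨U, hU, hUest⟩ :=
    exists_mem_nhds_norm_chartAt_mul_sub_add_le (G := G) (E := E) ℚ_[p] hn hε
  obtain ⟨V, hVc, hVo, hV1, hVU⟩ := ChartedSpace.exists_isCompact_isOpen_mem_subset (E := E)
    (inter_mem hU (chart_source_mem_nhds E 1))
  have hKo := isOpen_stabilizer_of_isCompact_of_isOpen hVc hVo
  refine ⟨_, hKo, hVc.of_isClosed_subset (Subgroup.isClosed_of_isOpen _ hKo)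
    (stabilizer_subset_of_one_mem hV1), fun _ => eq_one_of_isOfFinOrder_of_forall_prime ?_⟩
  intro g hg q hq hgq
  have hpow (m : ℕ) : g ^ m ∈ U ∩ (φ₁).source :=
    hVU (stabilizer_subset_of_one_mem hV1 (pow_mem hg m))
  set y : ℕ → E := fun m => φ₁ (g ^ m) - φ₁ 1
  have hy : ∀ m : ℕ, ‖y m - m • y 1‖ ≤ ε * ‖y 1‖ :=
    IsUltrametricDist.norm_sub_nsmul_le hε1 (by simp [y]) fun m hm => by
      simp only [y] at hm ⊢
      simpa only [← pow_add, max_eq_right hm] using hUest _ (hpow m).1 _ (hpow 1).1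
  have hy1 : y 1 = 0 := by
    have hq' := hy q
    rw [show y q = 0 by simp [y, hgq], zero_sub, norm_neg, ← Nat.cast_smul_eq_nsmul ℚ_[p],
      norm_smul] at hq'
    by_contra hne
    nlinarith [Padic.inv_le_norm_natCast_of_prime (p := p) hq, norm_pos_iff.mpr hne]
  exact (φ₁).injOn (by simpa using (hpow 1).2) (mem_chart_source E 1)
    (by simpa [y, sub_eq_zero] using hy1)

end ChartAtOne

/-- Remark 3.3: in an extraordinary p-adic Lie group, the radical of every
open subnormal subgroup is discrete. -/
theorem stmt17 (h : PadicLieGroup p G) (hex : h.Extraordinary)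
    (S : Subgroup G) (hsub : IsSubnormal S) (hopen : IsOpen (S : Set G)) :
    DiscreteTopology (radicalSet S) := by
  let := h.charted
  have := h.lie
  have := topologicalGroup_of_lieGroup 𝓘(ℚ_[p], Fin h.dim → ℚ_[p]) (⊤ : ℕ∞) (G := G)
  have := ChartedSpace.t1Space (Fin h.dim → ℚ_[p]) G
  obtain ⟨hns, -, hcomm⟩ := hex
  obtain ⟨K, hKo, hKc, hKtf⟩ := exists_isOpen_isCompact_subgroup_torsionFree
    (p := p) (G := G) (E := Fin h.dim → ℚ_[p]) (n := (⊤ : ℕ∞)) (by simp)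
  refine discreteTopology_of_inv_mul_mem (f := fun x : radicalSet S => ((x : S) : G))
    (by fun_prop) hKo K.one_mem fun x y hxy => ?_
  obtain ⟨N, hNS, hSN, hNsol, hxN, hyN⟩ := exists_isSolvable_mem_of_mem_radicalSet x.2 y.2
  have := hns.discreteTopology_topologicalClosure_of_isSolvable hcomm hsub
    (S.isClosed_of_isOpen hopen) hNS hSN
  have hfin := isOfFinOrder_of_mem_of_discreteTopology N.isClosed_topologicalClosure hKc
    (N.le_topologicalClosure (mul_mem (inv_mem hxN) hyN)) hxy
  exact Subtype.ext (Subtype.ext (inv_mul_eq_one.mp (hKtf _ hxy hfin)))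
end

section
/- If G is a soluble σ-compact p-adic Lie group with derived length n (i.e., G^{(n)} = {1} is the first trivial term of the derived series), then G is elementary and erk(G) ≤ 2n − 1. -/
open scoped Manifold
open Matrix

universe u

variable {p : ℕ} [Fact p.Prime] {G : Type*} [Group G] [TopologicalSpace G]

/-! A `p`-adic Lie group is locally homeomorphic to `ℚ_[p]^d`, so it is totally disconnected
and locally compact, and second countable once σ-compact. In such a group `A` take a compact
open subgroup `U` (van Dantzig) and the closed normal subgroup `H = closure [A, A]`. Then
`K = U H` is open and normal, `K / H` is profinite and `A / K` is countable discrete, so `A` is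
two extensions away from `H`; since closure commutes with commutators, `H` has derived length
one less than `A`. For abelian `A`, `U` itself is normal and one extension suffices, whence the
rank bound `2n - 1`. -/

open Set Topology Filter Pointwise

theorem exists_isCompact_isOpen_subset {X : Type*} [TopologicalSpace X] [LocallyCompactSpace X]
    [T2Space X] [TotallyDisconnectedSpace X] {U : Set X} {x : X} (hU : IsOpen U) (hx : x ∈ U) :
    ∃ K : Set X, IsCompact K ∧ IsOpen K ∧ x ∈ K ∧ K ⊆ U := by
  obtain ⟨s, hs, hxs, hsU⟩ := exists_compact_subset hU hx
  obtain ⟨V, hV, hxV, hVs⟩ :=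
    loc_compact_Haus_tot_disc_of_zero_dim.mem_nhds_iff.1 (isOpen_interior.mem_nhds hxs)
  exact ⟨V, hs.of_isClosed_subset hV.1 (hVs.trans interior_subset), hV.2, hxV,
    (hVs.trans interior_subset).trans hsU⟩

theorem ChartedSpace.totallyDisconnectedSpace (H : Type*) [TopologicalSpace H]
    [LocallyCompactSpace H] [T2Space H] [TotallyDisconnectedSpace H] (M : Type*)
    [TopologicalSpace M] [T2Space M] [ChartedSpace H M] : TotallyDisconnectedSpace M := by
  rw [totallyDisconnectedSpace_iff_connectedComponent_singleton]
  intro x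
  set e := chartAt H x
  obtain ⟨C, hCc, hCo, hxC, hCt⟩ :=
    exists_isCompact_isOpen_subset e.open_target (e.map_source (mem_chart_source H x))
  have hK : e.source ∩ e ⁻¹' C = e.symm '' C := (e.symm_image_eq_source_inter_preimage hCt).symm
  have hKc : IsCompact (e.source ∩ e ⁻¹' C) :=
    hK ▸ hCc.image_of_continuousOn (e.continuousOn_symm.mono hCt)
  have hsub : connectedComponent x ⊆ e.source ∩ e ⁻¹' C :=
    IsClopen.connectedComponent_subset ⟨hKc.isClosed, e.isOpen_inter_preimage hCo⟩
      ⟨mem_chart_source H x, hxC⟩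
  have hsrc : connectedComponent x ⊆ e.source := hsub.trans inter_subset_left
  have himg : (e '' connectedComponent x).Subsingleton :=
    (isPreconnected_connectedComponent.image _ (e.continuousOn.mono hsrc)).subsingleton
  refine subset_antisymm (fun y hy => ?_) (singleton_subset_iff.2 mem_connectedComponent)
  exact e.injOn (hsrc hy) (mem_chart_source H x)
    (himg ⟨y, hy, rfl⟩ ⟨x, mem_connectedComponent, rfl⟩)

section TopologicalGroup

variable {A : Type*} [Group A] [TopologicalSpace A]

theorem QuotientGroup.compactSpace_sup_quotient_subgroupOf (U H : Subgroup A) [H.Normal]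
    [CompactSpace U] : CompactSpace (↥(U ⊔ H) ⧸ H.subgroupOf (U ⊔ H)) := by
  refine Function.Surjective.compactSpace
    (f := fun u : U => (Subgroup.inclusion le_sup_left u : ↥(U ⊔ H)))
    (QuotientGroup.continuous_mk.comp (continuous_subtype_val.subtype_mk _)) ?_
  rintro ⟨x, hx⟩
  obtain ⟨u, hu, h, hh, rfl⟩ := Subgroup.mem_sup_of_normal_right.1 hx
  exact ⟨⟨u, hu⟩, QuotientGroup.eq.2 (by simpa [Subgroup.mem_subgroupOf] using hh)⟩

variable [IsTopologicalGroup A]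

theorem IsCompact.exists_compact_open_subgroup_subset {K : Set A} (hKc : IsCompact K)
    (hKo : IsOpen K) (h1 : (1 : A) ∈ K) :
    ∃ U : Subgroup A, IsCompact (U : Set A) ∧ IsOpen (U : Set A) ∧ (U : Set A) ⊆ K := by
  -- the stabiliser of `K` under left translation is a neighbourhood of `1` since `V K ⊆ K`
  obtain ⟨V, hV, hVK⟩ := compact_open_separated_mul_left hKc hKo subset_rfl
  have hsub : (MulAction.stabilizer A K : Set A) ⊆ K := fun g hg => by
    rw [SetLike.mem_coe, MulAction.mem_stabilizer_iff] at hg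
    simpa [hg] using smul_mem_smul_set (a := g) h1
  have hnhds : (MulAction.stabilizer A K : Set A) ∈ 𝓝 (1 : A) := by
    filter_upwards [hV, inv_mem_nhds_one A hV] with g hg hg'
    have hgK : g • K ⊆ K := (smul_set_subset_smul hg).trans hVK
    have hgK' : g⁻¹ • K ⊆ K := (smul_set_subset_smul (Set.mem_inv.1 hg')).trans hVK
    exact subset_antisymm hgK (subset_smul_set_iff.2 hgK')
  have hopen : IsOpen (MulAction.stabilizer A K : Set A) := Subgroup.isOpen_of_mem_nhds _ hnhds
  exact ⟨_, hKc.of_isClosed_subset (Subgroup.isClosed_of_isOpen _ hopen) hsub, hopen, hsub⟩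

theorem exists_compact_open_subgroup_subset [LocallyCompactSpace A] [T2Space A]
    [TotallyDisconnectedSpace A] {W : Set A} (hW : W ∈ 𝓝 (1 : A)) :
    ∃ U : Subgroup A, IsCompact (U : Set A) ∧ IsOpen (U : Set A) ∧ (U : Set A) ⊆ W := by
  obtain ⟨O, hOW, hO, h1O⟩ := mem_nhds_iff.1 hW
  obtain ⟨K, hKc, hKo, h1K, hKO⟩ := exists_isCompact_isOpen_subset hO h1O
  obtain ⟨U, hUc, hUo, hUK⟩ := hKc.exists_compact_open_subgroup_subset hKo h1K
  exact ⟨U, hUc, hUo, hUK.trans (hKO.trans hOW)⟩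

open scoped commutatorElement in
theorem Subgroup.commutator_topologicalClosure_le_s19 (B C : Subgroup A) :
    ⁅B.topologicalClosure, C.topologicalClosure⁆ ≤ (⁅B, C⁆ : Subgroup A).topologicalClosure := by
  set D := (⁅B, C⁆ : Subgroup A).topologicalClosure
  have hD : IsClosed (D : Set A) := Subgroup.isClosed_topologicalClosure _
  have hcont_left (b : A) : Continuous fun x : A => ⁅x, b⁆ := by
    simp only [commutatorElement_def]; fun_prop
  have hcont_right (a : A) : Continuous fun y : A => ⁅a, y⁆ := by
    simp only [commutatorElement_def]; fun_prop
  have hB (b : A) (hb : b ∈ C) :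
      _root_.closure (B : Set A) ⊆ (fun x : A => ⁅x, b⁆) ⁻¹' (D : Set A) :=
    closure_minimal
      (fun a ha => show ⁅a, b⁆ ∈ D from
        Subgroup.le_topologicalClosure _ (commutator_mem_commutator ha hb))
      (hD.preimage (hcont_left b))
  rw [Subgroup.commutator_le]
  intro a ha b hb
  exact closure_minimal (fun b hb => hB b hb ha) (hD.preimage (hcont_right a)) hb

theorem map_derivedSeries_le_topologicalClosure {B : Type*} [Group B] (f : B →* A) (m : ℕ)
    (hf : f.range ≤ (derivedSeries A m).topologicalClosure) (k : ℕ) :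
    (derivedSeries B k).map f ≤ (derivedSeries A (m + k)).topologicalClosure := by
  induction k with
  | zero => rwa [derivedSeries_zero, ← MonoidHom.range_eq_map]
  | succ k ih =>
    rw [derivedSeries_succ, Subgroup.map_commutator, ← add_assoc, derivedSeries_succ]
    exact (Subgroup.commutator_mono ih ih).trans (Subgroup.commutator_topologicalClosure_le_s19 _ _)

theorem derivedSeries_eq_bot_of_range_le_topologicalClosure [T1Space A] {B : Type*} [Group B]
    {f : B →* A} (hf_inj : Function.Injective f) {m k : ℕ}
    (hf : f.range ≤ (derivedSeries A m).topologicalClosure) (hA : derivedSeries A (m + k) = ⊥) :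
    derivedSeries B k = ⊥ := by
  have := map_derivedSeries_le_topologicalClosure f m hf k
  have hbot : (⊥ : Subgroup A).topologicalClosure ≤ ⊥ :=
    Subgroup.topologicalClosure_minimal _ le_rfl (by simp)
  rw [hA] at this
  exact (Subgroup.map_eq_bot_iff_of_injective _ hf_inj).1 (le_bot_iff.1 (this.trans hbot))

theorem QuotientGroup.totallyDisconnectedSpace [LocallyCompactSpace A] [T2Space A]
    [TotallyDisconnectedSpace A] (N : Subgroup A) [N.Normal] (hN : IsClosed (N : Set A)) :
    TotallyDisconnectedSpace (A ⧸ N) := by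
  rw [totallyDisconnectedSpace_iff_connectedComponent_one]
  refine subset_antisymm (fun q hq => ?_) (singleton_subset_iff.2 mem_connectedComponent)
  obtain ⟨x, rfl⟩ := QuotientGroup.mk_surjective q
  by_contra hx
  have hxN : x ∉ N := fun hxN => hx ((QuotientGroup.eq_one_iff x).2 hxN)
  -- a compact open subgroup `V` with `V x ∩ N = ∅` has clopen image missing `x N`
  have hW : (fun y : A => y * x) ⁻¹' (N : Set A)ᶜ ∈ 𝓝 (1 : A) :=
    (hN.isOpen_compl.preimage (by fun_prop)).mem_nhds (by simpa using hxN)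
  obtain ⟨V, -, hVo, hVW⟩ := exists_compact_open_subgroup_subset hW
  have hVo' : IsOpen ((V.map (QuotientGroup.mk' N) : Subgroup (A ⧸ N)) : Set (A ⧸ N)) :=
    QuotientGroup.isOpenMap_coe _ hVo
  obtain ⟨v, hv, hvx⟩ := IsClopen.connectedComponent_subset
    ⟨Subgroup.isClosed_of_isOpen _ hVo', hVo'⟩ (Subgroup.one_mem _) hq
  exact hVW (V.inv_mem hv) ((QuotientGroup.eq (s := N)).1 hvx)

end TopologicalGroup

section ConstructionRank

variable {A : Type u} [Group A] [TopologicalSpace A]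

theorem TDLCSC.subgroup (hA : TDLCSC A) {K : Subgroup A} (hK : IsClosed (K : Set A)) :
    TDLCSC K := by
  have ⟨_, _, _, _, _⟩ := hA
  exact ⟨inferInstance, hK.locallyCompactSpace, inferInstance, inferInstance,
    Topology.IsInducing.subtypeVal.secondCountableTopology⟩

theorem TDLCSC.quotient (hA : TDLCSC A) {N : Subgroup A} [N.Normal] (hN : IsClosed (N : Set A)) :
    TDLCSC (A ⧸ N) := by
  have ⟨_, _, _, _, _⟩ := hA
  exact ⟨inferInstance, inferInstance, inferInstance,
    QuotientGroup.totallyDisconnectedSpace N hN, inferInstance⟩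

theorem SigmaZero.of_compactSpace (hA : TDLCSC A) [CompactSpace A] : SigmaZero A := by
  have ⟨_, _, _, _, _⟩ := hA
  exact ⟨hA, .inr ⟨inferInstance, inferInstance, inferInstance, inferInstance⟩⟩

theorem SigmaZero.of_discreteTopology (hA : TDLCSC A) [DiscreteTopology A] : SigmaZero A := by
  have := hA.2.2.2.2
  exact ⟨hA, .inl ⟨TopologicalSpace.separableSpace_iff_countable.1 inferInstance, inferInstance⟩⟩

theorem SigmaClass.succ_of_isOpen (hA : TDLCSC A) {K : Subgroup A} [K.Normal]
    (hK : IsOpen (K : Set A)) {o : Ordinal.{u}} (hσ : SigmaClass o K) : SigmaClass (o + 1) A := by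
  have := hA.1
  have hKc := K.isClosed_of_isOpen hK
  have := QuotientGroup.discreteTopology hK
  exact .ext o A K inferInstance hA hKc hσ (.of_discreteTopology (hA.quotient hKc))

theorem SigmaClass.succ_of_compactSpace_quotient (hA : TDLCSC A) {N : Subgroup A} [N.Normal]
    (hN : IsClosed (N : Set A)) [CompactSpace (A ⧸ N)] {o : Ordinal.{u}} (hσ : SigmaClass o N) :
    SigmaClass (o + 1) A :=
  .ext o A N inferInstance hA hN hσ (.of_compactSpace (hA.quotient hN))

end ConstructionRank

theorem sigmaClass_of_derivedSeries_succ_eq_bot (n : ℕ) :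
    ∀ {A : Type u} [Group A] [TopologicalSpace A], TDLCSC A → derivedSeries A (n + 1) = ⊥ →
      SigmaClass ((2 * n + 1 : ℕ) : Ordinal.{u}) A := by
  induction n with
  | zero =>
    intro A _ _ hA h
    have ⟨_, _, _, _, _⟩ := hA
    obtain ⟨U, hUc, hUo, -⟩ := exists_compact_open_subgroup_subset (A := A) univ_mem
    have : U.Normal := .of_commutator_le A (by rw [← derivedSeries_one, h]; exact bot_le)
    have : CompactSpace U := isCompact_iff_compactSpace.1 hUc
    simpa using SigmaClass.succ_of_isOpen hA hUo
      (.base 0 U (.of_compactSpace (hA.subgroup (U.isClosed_of_isOpen hUo))))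
  | succ n ih =>
    intro A _ _ hA h
    have ⟨_, _, _, _, _⟩ := hA
    obtain ⟨U, hUc, hUo, -⟩ := exists_compact_open_subgroup_subset (A := A) univ_mem
    have : CompactSpace U := isCompact_iff_compactSpace.1 hUc
    set H := (derivedSeries A 1).topologicalClosure
    set K := U ⊔ H
    have : (derivedSeries A 1).Normal := derivedSeries_normal A 1
    have : H.Normal := Subgroup.is_normal_topologicalClosure _
    have : K.Normal := .of_commutator_le A
      ((derivedSeries_one A).symm.le.trans ((Subgroup.le_topologicalClosure _).trans le_sup_right))
    have hKo : IsOpen (K : Set A) := Subgroup.isOpen_mono le_sup_left hUo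
    have hK : TDLCSC K := hA.subgroup (K.isClosed_of_isOpen hKo)
    have hN : IsClosed (H.subgroupOf K : Set K) :=
      (Subgroup.isClosed_topologicalClosure _).preimage continuous_subtype_val
    have hNσ := ih (hK.subgroup hN)
      (derivedSeries_eq_bot_of_range_le_topologicalClosure (m := 1)
        (f := K.subtype.comp (H.subgroupOf K).subtype)
        (K.subtype_injective.comp (H.subgroupOf K).subtype_injective)
        (by rintro _ ⟨x, rfl⟩; exact x.2) (by rwa [add_comm]))
    have : CompactSpace (K ⧸ H.subgroupOf K) :=
      QuotientGroup.compactSpace_sup_quotient_subgroupOf U H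
    rw [show 2 * (n + 1) + 1 = 2 * n + 1 + 1 + 1 by ring, Nat.cast_add_one, Nat.cast_add_one]
    exact SigmaClass.succ_of_isOpen hA hKo
      (SigmaClass.succ_of_compactSpace_quotient hK hN hNσ)

theorem sigmaClass_of_derivedSeries_eq_bot {A : Type u} [Group A] [TopologicalSpace A]
    (hA : TDLCSC A) {n : ℕ} (h : derivedSeries A n = ⊥) :
    SigmaClass ((2 * n - 1 : ℕ) : Ordinal.{u}) A := by
  cases n with
  | zero =>
    rw [derivedSeries_zero] at h
    have : Subsingleton A := Subgroup.subsingleton_iff.1 (subsingleton_of_bot_eq_top h.symm)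
    exact .base _ A (.of_compactSpace hA)
  | succ n =>
    rw [show 2 * (n + 1) - 1 = 2 * n + 1 by omega]
    exact sigmaClass_of_derivedSeries_succ_eq_bot n hA h

theorem PadicLieGroup.tdlcsc (h : PadicLieGroup p G) [SigmaCompactSpace G] : TDLCSC G := by
  let := h.charted
  have := h.lie
  have : IsTopologicalGroup G :=
    topologicalGroup_of_lieGroup 𝓘(ℚ_[p], Fin h.dim → ℚ_[p]) (⊤ : ℕ∞)
  have : T1Space G := ChartedSpace.t1Space (Fin h.dim → ℚ_[p]) G
  exact ⟨inferInstance, ChartedSpace.locallyCompactSpace (Fin h.dim → ℚ_[p]) G, inferInstance,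
    ChartedSpace.totallyDisconnectedSpace (Fin h.dim → ℚ_[p]) G,
    ChartedSpace.secondCountable_of_sigmaCompact (Fin h.dim → ℚ_[p]) G⟩

theorem stmt19_general {G : Type u} [Group G] [TopologicalSpace G] (h : PadicLieGroup p G)
    [SigmaCompactSpace G] (n : ℕ) (hlen : derivedSeries G n = ⊥) :
    IsElementary G ∧ erk G ≤ ((2 * n - 1 : ℕ) : Ordinal) := by
  have hσ := sigmaClass_of_derivedSeries_eq_bot h.tdlcsc hlen
  exact ⟨⟨_, hσ⟩, csInf_le' hσ⟩

/-- Remark 3.6: soluble σ-compact p-adic Lie groups of derived length `n`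
are elementary of rank at most `2n - 1`. -/
theorem stmt19 {G : Type u} [Group G] [TopologicalSpace G] (h : PadicLieGroup p G)
    [SigmaCompactSpace G] (n : ℕ) (hlen : derivedSeries G n = ⊥)
    (hfirst : ∀ m < n, derivedSeries G m ≠ ⊥) :
    IsElementary G ∧ erk G ≤ ((2 * n - 1 : ℕ) : Ordinal) :=
  stmt19_general h n hlen
end
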